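/- arXiv:2308.08551 — 2 statements merged into one kernel-verified Lean document; each statement's English description precedes it below -/
import Mathlib

section
/- Let E be a bounded subset of ℝ^N (N ≥ 2, or more generally a finite-dimensional real normed space of dimension ≥ 2) such that E is connected and its complement ℝ^N \ E is connected. Then the topological boundary (frontier) of E is connected. -/
/-!
The frontier of `E` is `closure E ∩ closure Eᶜ`, the intersection of two closed connected sets
covering `ℝ^N`, so it suffices that `ℝ^N` is unicoherent: if it is the union of closed connected
sets `A` and `B`, then `A ∩ B` is connected. Suppose `A ∩ B` splits into disjoint
closed pieces `P ∋ p` and `Q ∋ q`, and let `u` be an Urysohn function, `0` on `P` and `1` on `Q`.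
The circle-valued map equal to `exp (iπu)` on `A` and to `exp (-iπu)` on `B` is continuous, since
the two agree where `u` is `0` or `1`. As the space is simply connected it lifts to `θ : X → ℝ`.
Then `θ - πu` is constant on `A` and `θ + πu` on `B`, because both take values in `2πℤ`; comparing
`p` with `q` gives `π = -π`.
-/

open Set Real

variable {X : Type*} [TopologicalSpace X]

theorem exists_circleExp_lift [SimplyConnectedSpace X] [LocallyPathConnectedSpace X]
    (f : C(X, Circle)) : ∃ θ : C(X, ℝ), Circle.exp ∘ θ = f := by
  obtain ⟨x₀⟩ : Nonempty X := inferInstance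
  obtain ⟨t₀, ht₀⟩ := Circle.exp_surjective (f x₀)
  obtain ⟨θ, ⟨-, hθ⟩, -⟩ := Circle.isCoveringMap_exp.existsUnique_continuousMap_lifts f x₀ t₀ ht₀
  exact ⟨θ, hθ⟩

theorem frontier_subset_inter_of_union_eq_univ {A B : Set X} (hA : IsClosed A) (hB : IsClosed B)
    (hAB : A ∪ B = univ) : frontier A ⊆ A ∩ B := by
  rw [frontier_eq_closure_inter_closure, hA.closure_eq]
  exact inter_subset_inter_right A (closure_minimal (compl_subset_iff_union.2 hAB) hB)

theorem ContinuousMap.exists_eqOn_of_union_eq_univ {Y : Type*} [TopologicalSpace Y]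
    {A B : Set X} (hA : IsClosed A) (hB : IsClosed B) (hAB : A ∪ B = univ) (φ ψ : C(X, Y))
    (hφψ : EqOn φ ψ (A ∩ B)) : ∃ g : C(X, Y), EqOn g φ A ∧ EqOn g ψ B := by
  classical
  refine ⟨⟨A.piecewise φ ψ, φ.continuous.piecewise
    (fun x hx => hφψ (frontier_subset_inter_of_union_eq_univ hA hB hAB hx)) ψ.continuous⟩,
    fun x hx => if_pos hx, fun x hx => ?_⟩
  by_cases hxA : x ∈ A
  · exact (if_pos hxA).trans (hφψ ⟨hxA, hx⟩)
  · exact if_neg hxA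

theorem IsPreconnected.sub_eq_sub_of_circleExp_eqOn {S : Set X} (hS : IsPreconnected S)
    {θ φ : X → ℝ} (hθ : ContinuousOn θ S) (hφ : ContinuousOn φ S)
    (h : EqOn (Circle.exp ∘ θ) (Circle.exp ∘ φ) S) {x y : X} (hx : x ∈ S) (hy : y ∈ S) :
    θ x - φ x = θ y - φ y := by
  have hone : ∀ z ∈ S, Circle.exp (θ z - φ z) = 1 := fun z hz => by
    rw [Circle.exp_sub, div_eq_one]; exact h hz
  exact Circle.isCoveringMap_exp.constOn_of_comp (g := fun z => θ z - φ z) hS (hθ.sub hφ)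
    (fun z hz w hw => by rw [hone z hz, hone w hw]) hx hy

theorem IsPreconnected.inter_of_union_eq_univ [SimplyConnectedSpace X]
    [LocallyPathConnectedSpace X] [NormalSpace X] {A B : Set X} (hA : IsPreconnected A)
    (hB : IsPreconnected B) (hAc : IsClosed A) (hBc : IsClosed B) (hAB : A ∪ B = univ) :
    IsPreconnected (A ∩ B) := by
  rw [isPreconnected_closed_iff]
  rintro P Q hP hQ hcover ⟨p, hpAB, hpP⟩ ⟨q, hqAB, hqQ⟩
  by_contra hPQ
  have hdisj : Disjoint (A ∩ B ∩ P) (A ∩ B ∩ Q) :=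
    disjoint_left.2 fun x ⟨hxAB, hxP⟩ ⟨_, hxQ⟩ => hPQ ⟨x, hxAB, hxP, hxQ⟩
  obtain ⟨u, hu0, hu1, -⟩ := exists_continuous_zero_one_of_isClosed
    ((hAc.inter hBc).inter hP) ((hAc.inter hBc).inter hQ) hdisj
  have hup : u p = 0 := hu0 ⟨hpAB, hpP⟩
  have huq : u q = 1 := hu1 ⟨hqAB, hqQ⟩
  have hfold : EqOn (Circle.exp.comp (π • u)) (Circle.exp.comp (-(π • u))) (A ∩ B) := by
    intro x hx
    rcases hcover hx with hxP | hxQ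
    · simp [hu0 ⟨hx, hxP⟩]
    · simp only [ContinuousMap.comp_apply, ContinuousMap.smul_apply, ContinuousMap.neg_apply,
        hu1 ⟨hx, hxQ⟩, Pi.one_apply, smul_eq_mul, mul_one]
      exact Circle.exp_eq_exp.2 ⟨1, by push_cast; ring⟩
  obtain ⟨f, hfA, hfB⟩ := ContinuousMap.exists_eqOn_of_union_eq_univ hAc hBc hAB _ _ hfold
  obtain ⟨θ, hθ⟩ := exists_circleExp_lift f
  have hconstA : θ q - π * u q = θ p - π * u p :=
    hA.sub_eq_sub_of_circleExp_eqOn (φ := fun x => π * u x) (by fun_prop) (by fun_prop)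
      (fun x hx => (congrFun hθ x).trans (hfA hx)) hqAB.1 hpAB.1
  have hconstB : θ q - -(π * u q) = θ p - -(π * u p) :=
    hB.sub_eq_sub_of_circleExp_eqOn (φ := fun x => -(π * u x)) (by fun_prop) (by fun_prop)
      (fun x hx => (congrFun hθ x).trans (hfB hx)) hqAB.2 hpAB.2
  rw [hup, huq] at hconstA hconstB
  linarith [pi_pos]

theorem IsConnected.frontier_of_isConnected_compl [SimplyConnectedSpace X]
    [LocallyPathConnectedSpace X] [NormalSpace X] {E : Set X} (hE : IsConnected E)
    (hEc : IsConnected Eᶜ) : IsConnected (frontier E) := by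
  refine ⟨nonempty_frontier_iff.2 ⟨hE.nonempty, fun h => ?_⟩, ?_⟩
  · simpa [h] using hEc.nonempty
  rw [frontier_eq_closure_inter_closure]
  exact hE.isPreconnected.closure.inter_of_union_eq_univ hEc.isPreconnected.closure
    isClosed_closure isClosed_closure
    (eq_univ_of_subset (union_subset_union subset_closure subset_closure) (union_compl_self E))

theorem boundary_connected_of_connected_complement_general
    (N : ℕ) (E : Set (EuclideanSpace ℝ (Fin N)))
    (hE : IsConnected E) (hEc : IsConnected Eᶜ) :
    IsConnected (frontier E) :=
  hE.frontier_of_isConnected_compl hEc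

theorem boundary_connected_of_connected_complement
    (N : ℕ) (hN : 2 ≤ N) (E : Set (EuclideanSpace ℝ (Fin N)))
    (hEb : Bornology.IsBounded E) (hE : IsConnected E) (hEc : IsConnected Eᶜ) :
    IsConnected (frontier E) :=
  boundary_connected_of_connected_complement_general N E hE hEc
end

section
/- Let E and F be subsets of ℝ^N with N ≥ 2 whose union is all of ℝ^N, and suppose E is bounded. For ε > 0, let E(ε) and F(ε) denote the open ε-neighborhoods (thickenings) of E and F respectively. If E and F are connected, then E(ε) ∩ F(ε) is connected for every ε > 0. -/
open Set Metric

private lemma comb_relabel {X : Type*} (τ : X → ZMod 2) (n : ℕ) (hn : 1 ≤ n)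
    (x : ℕ → X) (ℓ ℓ' : ℕ → Bool)
    (hτ : ∀ j < n, ℓ j ≠ ℓ' j → τ (x j) = τ (x (j + 1)))
    (h0 : τ (x 0) = 0) (hn0 : τ (x n) = 0) :
    (∑ j ∈ Finset.range (n - 1), if ℓ j ≠ ℓ (j + 1) then τ (x (j + 1)) else 0)
      = ∑ j ∈ Finset.range (n - 1), if ℓ' j ≠ ℓ' (j + 1) then τ (x (j + 1)) else 0 := by
  classical
  set N : ℕ → ZMod 2 := fun j => if ℓ j ≠ ℓ' j then τ (x j) else 0 with hN
  have hneg : ∀ c : ZMod 2, -c = c := by decide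
  have key : ∀ j ∈ Finset.range (n - 1),
      (if ℓ j ≠ ℓ (j + 1) then τ (x (j + 1)) else 0)
        - (if ℓ' j ≠ ℓ' (j + 1) then τ (x (j + 1)) else 0) = N (j + 1) - N j := by
    intro j hj
    rw [Finset.mem_range] at hj
    have hjn : j < n := lt_of_lt_of_le hj (Nat.sub_le n 1)
    have hNj : N j = if ℓ j ≠ ℓ' j then τ (x (j + 1)) else 0 := by
      by_cases h : ℓ j = ℓ' j
      · simp [hN, h]
      · simp only [hN, if_pos h, hτ j hjn h]
    rw [hNj]
    simp only [hN]
    cases h1 : ℓ j <;> cases h2 : ℓ (j + 1) <;> cases h3 : ℓ' j <;> cases h4 : ℓ' (j + 1) <;>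
      simp [zero_sub, sub_zero, hneg]
  have hN0 : N 0 = 0 := by
    by_cases h : ℓ 0 = ℓ' 0 <;> simp [hN, h, h0]
  have hNn : N (n - 1) = 0 := by
    have h1 : n - 1 < n := by omega
    have h2 : n - 1 + 1 = n := by omega
    by_cases h : ℓ (n - 1) = ℓ' (n - 1)
    · simp [hN, h]
    · have := hτ _ h1 h
      rw [h2] at this
      simp only [hN, if_pos h, this, hn0]
  have hdiff : (∑ j ∈ Finset.range (n - 1), if ℓ j ≠ ℓ (j + 1) then τ (x (j + 1)) else 0)
      - (∑ j ∈ Finset.range (n - 1), if ℓ' j ≠ ℓ' (j + 1) then τ (x (j + 1)) else 0) = 0 := by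
    rw [← Finset.sum_sub_distrib, Finset.sum_congr rfl key, Finset.sum_range_sub, hNn, hN0]
    simp
  exact sub_eq_zero.mp hdiff

private lemma inter_preconnected_of_cover {X : Type*} [NormedAddCommGroup X] [NormedSpace ℝ X]
    {U V : Set X} (hUo : IsOpen U) (hVo : IsOpen V)
    (hUc : IsPreconnected U) (hVc : IsPreconnected V) (hUV : U ∪ V = univ) :
    IsPreconnected (U ∩ V) := by
  classical
  by_contra hS
  unfold IsPreconnected at hS
  push_neg at hS
  obtain ⟨u, v, hu, hv, hcov, ⟨a, hau⟩, ⟨b, hbv⟩, hdisj⟩ := hS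
  have haU : a ∈ U := hau.1.1
  have haV : a ∈ V := hau.1.2
  have hbU : b ∈ U := hbv.1.1
  have hbV : b ∈ V := hbv.1.2
  -- paths
  have hUconn : IsConnected U := ⟨⟨a, haU⟩, hUc⟩
  have hVconn : IsConnected V := ⟨⟨a, haV⟩, hVc⟩
  have hUpc : IsPathConnected U := hUo.isConnected_iff_isPathConnected.mp hUconn
  have hVpc : IsPathConnected V := hVo.isConnected_iff_isPathConnected.mp hVconn
  obtain ⟨γ₁, hγ₁⟩ := hUpc.joinedIn a haU b hbU
  obtain ⟨γ₂, hγ₂⟩ := hVpc.joinedIn b hbV a haV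
  -- the ZMod 2 coloring
  set τ : X → ZMod 2 := fun z => if z ∈ (U ∩ V) ∩ v then 1 else 0 with hτdef
  have hτa : τ a = 0 := by
    have h : a ∉ (U ∩ V) ∩ v := by
      intro h
      have : a ∈ (U ∩ V) ∩ (u ∩ v) := ⟨h.1, hau.2, h.2⟩
      rw [hdisj] at this
      exact this
    simp only [hτdef]
    exact if_neg h
  have hτb : τ b = 1 := by
    simp only [hτdef]
    exact if_pos ⟨hbv.1, hbv.2⟩
  have hconst : ∀ c : Set X, IsPreconnected c → c ⊆ U → c ⊆ V →
      ∀ {z w}, z ∈ c → w ∈ c → τ z = τ w := by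
    intro c hc hcU hcV z w hz hw
    have hcS : c ⊆ U ∩ V := subset_inter hcU hcV
    by_cases hcu : (c ∩ u).Nonempty
    · by_cases hcv : (c ∩ v).Nonempty
      · obtain ⟨p, hp⟩ := hc u v hu hv (hcS.trans hcov) hcu hcv
        have : p ∈ (U ∩ V) ∩ (u ∩ v) := ⟨hcS hp.1, hp.2⟩
        rw [hdisj] at this
        exact this.elim
      · have hz0 : ∀ q ∈ c, τ q = 0 := by
          intro q hq
          have h' : q ∉ (U ∩ V) ∩ v := fun h => hcv ⟨q, hq, h.2⟩
          simp only [hτdef]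
          exact if_neg h'
        rw [hz0 z hz, hz0 w hw]
    · have hz1 : ∀ q ∈ c, τ q = 1 := by
        intro q hq
        have hqv : q ∈ v := by
          rcases hcov (hcS hq) with h | h
          · exact absurd ⟨q, hq, h⟩ hcu
          · exact h
        simp only [hτdef]
        exact if_pos ⟨hcS hq, hqv⟩
      rw [hz1 z hz, hz1 w hw]
  -- the concatenated loop, extended to ℝ
  set g : ℝ → X := fun t => if t ≤ 1 / 2 then γ₁.extend (2 * t) else γ₂.extend (2 * t - 1)
    with hgdef
  have hg1U : ∀ t : ℝ, γ₁.extend t ∈ U := by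
    intro t
    have h : γ₁.extend t ∈ range γ₁.extend := mem_range_self t
    rw [Path.extend_range] at h
    obtain ⟨s, hs⟩ := h
    rw [← hs]; exact hγ₁ s
  have hg2V : ∀ t : ℝ, γ₂.extend t ∈ V := by
    intro t
    have h : γ₂.extend t ∈ range γ₂.extend := mem_range_self t
    rw [Path.extend_range] at h
    obtain ⟨s, hs⟩ := h
    rw [← hs]; exact hγ₂ s
  have hgcont : Continuous g := by
    apply Continuous.if_le
    · exact γ₁.continuous_extend.comp (by fun_prop)
    · exact γ₂.continuous_extend.comp (by fun_prop)
    · exact continuous_id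
    · exact continuous_const
    · intro t ht
      rw [ht]
      norm_num
  have hgU : ∀ t : ℝ, t ≤ 1 / 2 → g t ∈ U := by
    intro t ht
    simp only [hgdef, if_pos ht]
    exact hg1U _
  have hgV : ∀ t : ℝ, 1 / 2 ≤ t → g t ∈ V := by
    intro t ht
    by_cases h : t ≤ 1 / 2
    · have he : t = 1 / 2 := le_antisymm h ht
      simp only [hgdef, if_pos h, he]
      norm_num
      exact hbV
    · simp only [hgdef, if_neg h]
      exact hg2V _
  have hg0 : g 0 = a := by norm_num [hgdef]
  have hg1 : g 1 = a := by norm_num [hgdef]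
  have hghalf : g (1 / 2) = b := by norm_num [hgdef]
  -- contraction homotopy
  set Φ : ℝ × ℝ → X := fun p => (1 - p.1) • g p.2 + p.1 • a with hΦdef
  have hΦc : Continuous Φ :=
    ((continuous_const.sub continuous_fst).smul (hgcont.comp continuous_snd)).add
      (continuous_fst.smul continuous_const)
  have hΦ0 : ∀ t, Φ (0, t) = g t := by intro t; simp [hΦdef]
  have hΦa : ∀ s t, g t = a → Φ (s, t) = a := by
    intro s t h
    have h2 : (1 : ℝ) - s + s = 1 := by ring
    simp only [hΦdef, h]
    rw [← add_smul, h2, one_smul]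
  have hΦ1 : ∀ t : ℝ, Φ (1, t) = a := by
    intro t
    simp [hΦdef]
  -- labels for Bool
  set lab : Bool → Set X := fun i => if i then U else V with hlabdef
  have hlabopen : ∀ i, IsOpen (lab i) := by
    intro i; cases i <;> simp [hlabdef, hUo, hVo]
  -- Lebesgue number for the covering of the unit square
  have hKcpt : IsCompact ((Icc (0:ℝ) 1) ×ˢ (Icc (0:ℝ) 1)) := isCompact_Icc.prod isCompact_Icc
  have hKcov : ((Icc (0:ℝ) 1) ×ˢ (Icc (0:ℝ) 1)) ⊆ ⋃ i, Φ ⁻¹' lab i := by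
    intro p _
    have hp : Φ p ∈ U ∪ V := by rw [hUV]; trivial
    rcases hp with h | h
    · exact mem_iUnion.mpr ⟨true, by simpa [hlabdef] using h⟩
    · exact mem_iUnion.mpr ⟨false, by simpa [hlabdef] using h⟩
  obtain ⟨δ, hδ0, hδ⟩ := lebesgue_number_lemma_of_metric hKcpt
    (fun i => (hlabopen i).preimage hΦc) hKcov
  -- grid size
  set m : ℕ := Nat.ceil (1 / δ) + 1 with hm
  set n : ℕ := 2 * m with hn
  have hnpos : 0 < n := by omega
  have hnR : (0:ℝ) < (n:ℝ) := by exact_mod_cast hnpos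
  have hsmall : 1 / (n:ℝ) < δ := by
    have h1 : (1:ℝ) / δ ≤ (Nat.ceil (1 / δ) : ℝ) := Nat.le_ceil _
    have h2 : ((Nat.ceil (1 / δ) : ℕ) : ℝ) < (n:ℝ) := by
      have : Nat.ceil (1 / δ) < n := by omega
      exact_mod_cast this
    have h3 : 1 / δ < (n:ℝ) := lt_of_le_of_lt h1 h2
    rw [div_lt_iff₀ hnR]
    rw [div_lt_iff₀ hδ0] at h3
    linarith
  -- the squares
  set sq : ℕ → ℕ → Set (ℝ × ℝ) := fun r j =>
    Icc ((r:ℝ)/(n:ℝ)) (((r:ℝ)+1)/(n:ℝ)) ×ˢ Icc ((j:ℝ)/(n:ℝ)) (((j:ℝ)+1)/(n:ℝ)) with hsqdef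
  have hsqor : ∀ r < n, ∀ j < n, (∀ p ∈ sq r j, Φ p ∈ U) ∨ (∀ p ∈ sq r j, Φ p ∈ V) := by
    intro r hr j hj
    have hr1 : (r:ℝ)/(n:ℝ) ∈ Icc (0:ℝ) 1 := by
      constructor
      · positivity
      · rw [div_le_one hnR]; exact_mod_cast hr.le
    have hj1 : (j:ℝ)/(n:ℝ) ∈ Icc (0:ℝ) 1 := by
      constructor
      · positivity
      · rw [div_le_one hnR]; exact_mod_cast hj.le
    obtain ⟨i, hi⟩ := hδ ((r:ℝ)/(n:ℝ), (j:ℝ)/(n:ℝ)) (mk_mem_prod hr1 hj1)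
    have hball : sq r j ⊆ ball ((r:ℝ)/(n:ℝ), (j:ℝ)/(n:ℝ)) δ := by
      rintro ⟨p1, p2⟩ ⟨⟨h1a, h1b⟩, h2a, h2b⟩
      have hstep : ((r:ℝ)+1)/(n:ℝ) - (r:ℝ)/(n:ℝ) = 1/(n:ℝ) := by ring
      have hstep2 : ((j:ℝ)+1)/(n:ℝ) - (j:ℝ)/(n:ℝ) = 1/(n:ℝ) := by ring
      have e1 : dist p1 ((r:ℝ)/(n:ℝ)) < δ := by
        rw [Real.dist_eq, abs_of_nonneg (by linarith)]
        linarith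
      have e2 : dist p2 ((j:ℝ)/(n:ℝ)) < δ := by
        rw [Real.dist_eq, abs_of_nonneg (by linarith)]
        linarith
      rw [mem_ball, Prod.dist_eq]
      exact max_lt e1 e2
    cases i
    · right; intro p hp
      have := hi (hball hp)
      simpa [hlabdef] using this
    · left; intro p hp
      have := hi (hball hp)
      simpa [hlabdef] using this
  -- square labels
  set L : ℕ → ℕ → Bool := fun r j => decide (∀ p ∈ sq r j, Φ p ∈ U) with hLdef
  have hlabL : ∀ r < n, ∀ j < n, ∀ p ∈ sq r j, Φ p ∈ lab (L r j) := by
    intro r hr j hj p hp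
    by_cases h : ∀ q ∈ sq r j, Φ q ∈ U
    · have hLt : L r j = true := by
        simp only [hLdef, decide_eq_true_eq]; exact h
      rw [hLt]
      simpa [hlabdef] using h p hp
    · have hLf : L r j = false := by
        simp only [hLdef, decide_eq_false_iff_not]; exact h
      rw [hLf]
      rcases hsqor r hr j hj with h' | h'
      · exact absurd h' h
      · simpa [hlabdef] using h' p hp
  -- grid vertices
  set xv : ℕ → ℕ → X := fun r j => Φ ((r:ℝ)/(n:ℝ), (j:ℝ)/(n:ℝ)) with hxvdef
  -- the parity invariant
  set W : (ℕ → X) → (ℕ → Bool) → ZMod 2 := fun x ℓ =>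
    ∑ j ∈ Finset.range (n - 1), if ℓ j ≠ ℓ (j + 1) then τ (x (j + 1)) else 0 with hWdef
  have hxv0 : ∀ r, xv r 0 = a := by
    intro r
    have : ((0:ℕ):ℝ)/(n:ℝ) = 0 := by norm_num
    simp only [hxvdef, this]
    exact hΦa _ _ hg0
  have hxvn : ∀ r, xv r n = a := by
    intro r
    have : ((n:ℕ):ℝ)/(n:ℝ) = 1 := div_self (ne_of_gt hnR)
    simp only [hxvdef, this]
    exact hΦa _ _ hg1
  have hmonoR : ∀ x : ℝ, x/(n:ℝ) ≤ (x+1)/(n:ℝ) := by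
    intro x
    exact (div_le_div_iff_of_pos_right hnR).mpr (by linarith)
  have hpair : ∀ (b1 b2 : Bool) (s : Set X), b1 ≠ b2 → s ⊆ lab b1 → s ⊆ lab b2 →
      s ⊆ U ∧ s ⊆ V := by
    intro b1 b2 s hne h1 h2
    cases b1 <;> cases b2
    · exact absurd rfl hne
    · exact ⟨by simpa [hlabdef] using h2, by simpa [hlabdef] using h1⟩
    · exact ⟨by simpa [hlabdef] using h1, by simpa [hlabdef] using h2⟩
    · exact absurd rfl hne
  have hnm : (n:ℝ) = 2*(m:ℝ) := by rw [hn]; push_cast; ring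
  have hmn2 : (m:ℝ)/(n:ℝ) = 1/2 := by
    have hm0 : (0:ℝ) < (m:ℝ) := by exact_mod_cast (by omega : 0 < m)
    rw [hnm, div_eq_iff (by positivity)]
    ring
  -- row-to-row invariance (same labels)
  have hArow : ∀ r < n, W (xv r) (L r) = W (xv (r + 1)) (L r) := by
    intro r hr
    simp only [hWdef]
    apply Finset.sum_congr rfl
    intro j hj
    rw [Finset.mem_range] at hj
    have hjn : j < n := by omega
    have hj1n : j + 1 < n := by omega
    by_cases hne : L r j = L r (j + 1)
    · simp [hne]
    · rw [if_pos hne, if_pos hne]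
      set C := (fun s => Φ (s, ((j:ℝ)+1)/(n:ℝ))) '' Icc ((r:ℝ)/(n:ℝ)) (((r:ℝ)+1)/(n:ℝ)) with hC
      have hCpre : IsPreconnected C :=
        isPreconnected_Icc.image _
          ((hΦc.comp (continuous_id.prodMk continuous_const)).continuousOn)
      have hsub1 : C ⊆ lab (L r j) := by
        rintro z ⟨s, hs, rfl⟩
        exact hlabL r hr j hjn (s, ((j:ℝ)+1)/(n:ℝ)) ⟨hs, hmonoR _, le_refl _⟩
      have hsub2 : C ⊆ lab (L r (j + 1)) := by
        rintro z ⟨s, hs, rfl⟩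
        apply hlabL r hr (j+1) hj1n (s, ((j:ℝ)+1)/(n:ℝ))
        refine ⟨hs, ?_, ?_⟩
        · push_cast; exact le_refl _
        · push_cast; exact hmonoR _
      obtain ⟨hCU, hCV⟩ := hpair _ _ _ hne hsub1 hsub2
      have hm1 : xv r (j+1) ∈ C := by
        refine ⟨(r:ℝ)/(n:ℝ), ⟨le_refl _, hmonoR _⟩, ?_⟩
        simp only [hxvdef]; push_cast; rfl
      have hm2 : xv (r+1) (j+1) ∈ C := by
        refine ⟨((r:ℝ)+1)/(n:ℝ), ⟨hmonoR _, le_refl _⟩, ?_⟩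
        simp only [hxvdef]; push_cast; rfl
      exact hconst C hCpre hCU hCV hm1 hm2
  -- relabeling invariance for a fixed row
  have hrel : ∀ (r : ℕ) (ℓ ℓ' : ℕ → Bool),
      (∀ j < n, ℓ j ≠ ℓ' j →
        ((fun t => Φ ((r:ℝ)/(n:ℝ), t)) '' Icc ((j:ℝ)/(n:ℝ)) (((j:ℝ)+1)/(n:ℝ))) ⊆ U ∧
        ((fun t => Φ ((r:ℝ)/(n:ℝ), t)) '' Icc ((j:ℝ)/(n:ℝ)) (((j:ℝ)+1)/(n:ℝ))) ⊆ V) →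
      W (xv r) ℓ = W (xv r) ℓ' := by
    intro r ℓ ℓ' hedges
    simp only [hWdef]
    apply comb_relabel τ n (by omega) (xv r) ℓ ℓ'
    · intro j hj hne
      obtain ⟨hsU, hsV⟩ := hedges j hj hne
      have hCpre : IsPreconnected
          ((fun t => Φ ((r:ℝ)/(n:ℝ), t)) '' Icc ((j:ℝ)/(n:ℝ)) (((j:ℝ)+1)/(n:ℝ))) :=
        isPreconnected_Icc.image _
          ((hΦc.comp (continuous_const.prodMk continuous_id)).continuousOn)
      refine hconst _ hCpre hsU hsV ?_ ?_
      · exact ⟨(j:ℝ)/(n:ℝ), ⟨le_refl _, hmonoR _⟩, rfl⟩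
      · refine ⟨((j:ℝ)+1)/(n:ℝ), ⟨hmonoR _, le_refl _⟩, ?_⟩
        simp only [hxvdef]; push_cast; rfl
    · rw [hxv0]; exact hτa
    · rw [hxvn]; exact hτa
  -- horizontal edges lie in the labels of the squares below/above them
  have hHsubL : ∀ r < n, ∀ j < n,
      ((fun t => Φ ((r:ℝ)/(n:ℝ), t)) '' Icc ((j:ℝ)/(n:ℝ)) (((j:ℝ)+1)/(n:ℝ))) ⊆ lab (L r j) := by
    intro r hr j hj
    rintro z ⟨t, ht, rfl⟩
    exact hlabL r hr j hj ((r:ℝ)/(n:ℝ), t) ⟨⟨le_refl _, hmonoR _⟩, ht⟩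
  have hHsubL' : ∀ r, r + 1 < n → ∀ j < n,
      ((fun t => Φ (((r+1:ℕ):ℝ)/(n:ℝ), t)) '' Icc ((j:ℝ)/(n:ℝ)) (((j:ℝ)+1)/(n:ℝ)))
        ⊆ lab (L r j) := by
    intro r hr j hj
    rintro z ⟨t, ht, rfl⟩
    apply hlabL r (by omega) j hj (((r+1:ℕ):ℝ)/(n:ℝ), t)
    refine ⟨⟨?_, ?_⟩, ht⟩
    · push_cast; exact hmonoR _
    · push_cast; exact le_refl _
  -- the bottom row natural labels
  have hHsub0 : ∀ j < n,
      ((fun t => Φ (((0:ℕ):ℝ)/(n:ℝ), t)) '' Icc ((j:ℝ)/(n:ℝ)) (((j:ℝ)+1)/(n:ℝ)))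
        ⊆ lab (decide (j < m)) := by
    intro j hj
    rintro z ⟨t, ht, rfl⟩
    have h0n : ((0:ℕ):ℝ)/(n:ℝ) = 0 := by norm_num
    show Φ (((0:ℕ):ℝ)/(n:ℝ), t) ∈ _
    rw [h0n, hΦ0]
    by_cases hjm : j < m
    · have hdec : decide (j < m) = true := by simp [hjm]
      rw [hdec]
      have hj1m : ((j:ℝ)+1)/(n:ℝ) ≤ 1/2 := by
        rw [← hmn2]
        apply (div_le_div_iff_of_pos_right hnR).mpr
        have hh : j + 1 ≤ m := hjm
        exact_mod_cast hh
      have htt : t ≤ 1/2 := le_trans ht.2 hj1m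
      simpa [hlabdef] using hgU t htt
    · have hdec : decide (j < m) = false := by simp [hjm]
      rw [hdec]
      have hjm' : (1:ℝ)/2 ≤ (j:ℝ)/(n:ℝ) := by
        rw [← hmn2]
        apply (div_le_div_iff_of_pos_right hnR).mpr
        exact_mod_cast Nat.le_of_not_lt hjm
      have htt : 1/2 ≤ t := le_trans hjm' ht.1
      simpa [hlabdef] using hgV t htt
  -- value of the invariant on the bottom row
  have hxvm : xv 0 m = b := by
    have h0n : ((0:ℕ):ℝ)/(n:ℝ) = 0 := by norm_num
    simp only [hxvdef, h0n]
    rw [hΦ0, hmn2, hghalf]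
  have hbot : W (xv 0) (fun j => decide (j < m)) = 1 := by
    simp only [hWdef]
    have hmem : m - 1 ∈ Finset.range (n-1) := Finset.mem_range.mpr (by omega)
    rw [Finset.sum_eq_single_of_mem (m-1) hmem ?side]
    case side =>
      intro j hj hne
      rw [Finset.mem_range] at hj
      have hdeceq : decide (j < m) = decide (j + 1 < m) := by
        by_cases h1 : j < m <;> by_cases h2 : j + 1 < m <;> simp [h1, h2] <;> omega
      simp only [hdeceq, ne_eq, not_true_eq_false, if_false]
    have hm1lt : m - 1 < m := by omega
    have hm11 : m - 1 + 1 = m := by omega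
    have hcond : decide (m - 1 < m) ≠ decide (m - 1 + 1 < m) := by
      simp only [ne_eq, decide_eq_decide]
      omega
    rw [if_pos hcond, hm11, hxvm, hτb]
  -- the top row
  have hxvtop : ∀ j, xv n j = a := by
    intro j
    have hh : ((n:ℕ):ℝ)/(n:ℝ) = 1 := div_self (ne_of_gt hnR)
    simp only [hxvdef, hh]
    exact hΦ1 _
  have htop : ∀ ℓ : ℕ → Bool, W (xv n) ℓ = 0 := by
    intro ℓ
    simp only [hWdef]
    apply Finset.sum_eq_zero
    intro j hj
    rw [hxvtop, hτa]
    simp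
  -- induction over the rows
  have hind : ∀ r, r ≤ n - 1 → W (xv r) (L r) = 1 := by
    intro r
    induction r with
    | zero =>
      intro _
      have e1 : W (xv 0) (L 0) = W (xv 0) (fun j => decide (j < m)) :=
        hrel 0 (L 0) (fun j => decide (j < m))
          (fun j hj hne => hpair _ _ _ hne (hHsubL 0 (by omega) j hj) (hHsub0 j hj))
      rw [e1, hbot]
    | succ r ih =>
      intro hr
      have h1 := ih (by omega)
      have h2 := hArow r (by omega)
      have h3 : W (xv (r+1)) (L r) = W (xv (r+1)) (L (r+1)) :=
        hrel (r+1) (L r) (L (r+1))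
          (fun j hj hne =>
            hpair _ _ _ hne (hHsubL' r (by omega) j hj) (hHsubL (r+1) (by omega) j hj))
      rw [← h3, ← h2]; exact h1
  have hlast := hind (n-1) le_rfl
  have h2 := hArow (n-1) (by omega)
  have hn1 : n - 1 + 1 = n := by omega
  rw [hn1] at h2
  rw [h2, htop] at hlast
  exact one_ne_zero hlast.symm

theorem thickening_inter_connected
    (N : ℕ) (hN : 2 ≤ N) (E F : Set (EuclideanSpace ℝ (Fin N)))
    (hUnion : E ∪ F = Set.univ) (hEb : Bornology.IsBounded E)
    (hE : IsConnected E) (hF : IsConnected F) :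
    ∀ ε > 0, IsConnected (Metric.thickening ε E ∩ Metric.thickening ε F) := by
  intro ε hε
  have hth : ∀ G : Set (EuclideanSpace ℝ (Fin N)), IsConnected G →
      IsConnected (Metric.thickening ε G) := by
    intro G hG
    obtain ⟨⟨x₀, hx₀⟩, hGc⟩ := hG
    have he : Metric.thickening ε G = ⋃ y ∈ G, (ball y ε ∪ G) := by
      rw [Metric.thickening_eq_biUnion_ball]
      ext z
      simp only [mem_iUnion, mem_union, exists_prop]
      constructor
      · rintro ⟨y, hy, h⟩; exact ⟨y, hy, Or.inl h⟩
      · rintro ⟨y, hy, h | h⟩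
        · exact ⟨y, hy, h⟩
        · exact ⟨z, h, mem_ball_self hε⟩
    rw [he]
    constructor
    · exact ⟨x₀, mem_biUnion hx₀ (Or.inr hx₀)⟩
    · rw [← sUnion_image]
      apply isPreconnected_sUnion x₀
      · rintro s ⟨y, hy, rfl⟩
        exact Or.inr hx₀
      · rintro s ⟨y, hy, rfl⟩
        exact IsPreconnected.union y (mem_ball_self hε) hy (convex_ball y ε).isPreconnected hGc
  have hUconn := hth E hE
  have hVconn := hth F hF
  have hUV : Metric.thickening ε E ∪ Metric.thickening ε F = univ := by
    apply eq_univ_of_univ_subset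
    rw [← hUnion]
    exact union_subset_union (Metric.self_subset_thickening hε E)
      (Metric.self_subset_thickening hε F)
  have hpre := inter_preconnected_of_cover Metric.isOpen_thickening Metric.isOpen_thickening
    hUconn.2 hVconn.2 hUV
  have hne : (Metric.thickening ε E ∩ Metric.thickening ε F).Nonempty := by
    obtain ⟨e₀, he₀⟩ := hE.nonempty
    obtain ⟨f₀, hf₀⟩ := hF.nonempty
    have hcvx : IsPreconnected (univ : Set (EuclideanSpace ℝ (Fin N))) :=
      (convex_univ (𝕜 := ℝ)).isPreconnected
    obtain ⟨p, _, hp⟩ := hcvx (Metric.thickening ε E) (Metric.thickening ε F)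
      Metric.isOpen_thickening Metric.isOpen_thickening (by rw [hUV])
      ⟨e₀, mem_univ _, Metric.self_subset_thickening hε E he₀⟩
      ⟨f₀, mem_univ _, Metric.self_subset_thickening hε F hf₀⟩
    exact ⟨p, hp⟩
  exact ⟨hne, hpre⟩
end
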